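/- Let b ∈ ℝ^n be a unit vector with all entries nonzero, let λ be the smallest eigenvalue of W(b), and let x be a unit eigenvector of W(b) for λ such that in addition W(x) b = λ b. Then λ = (1ᵀ σ* Ψ^{-1} σ* 1)^{-1}, the vector of squared entries of b satisfies (b_1², …, b_n²)ᵀ = λ · σ* Ψ^{-1} σ* 1, and x = σ* b or x = −σ* b. -/

import Mathlib

/-!
Write `Ψ` for the Cauchy matrix. The two eigenvalue equations force `x = ε ∘ b` for a sign vector
`ε` with `Ψ (ε ∘ b²) = λ ε`; hence `b² = λ ε ∘ Ψ⁻¹ ε` and `λ · εᵀ Ψ⁻¹ ε = 1`. Evaluating the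
Rayleigh quotient of `W(b)` at `Ψ⁻¹ σ* 1 / b` and applying Cauchy–Schwarz gives
`λ · 1ᵀ σ* Ψ⁻¹ σ* 1 ≤ 1`, that is `1ᵀ σ* Ψ⁻¹ σ* 1 ≤ εᵀ Ψ⁻¹ ε`. On the other hand all entries of
`σ* Ψ⁻¹ σ*` are positive, because all minors of a Cauchy matrix with increasing nodes are positive;
so over sign vectors `δ` the form `δᵀ σ* Ψ⁻¹ σ* δ` is maximal only at `δ = ±1`, which forces
`σ* ε = ±1`. Positivity of the minors, and positive semidefiniteness of `Ψ`, follow by induction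
on the size, since the Schur complement of a corner entry of a Cauchy matrix is a Cauchy matrix
rescaled by diagonal matrices.
-/

open Matrix BigOperators

/-- The Cauchy matrix with entries `1/(λᵢ + λⱼ)`. -/
noncomputable def cauchyPsi (n : ℕ) (lam : Fin n → ℝ) : Matrix (Fin n) (Fin n) ℝ :=
  Matrix.of fun i j => 1 / (lam i + lam j)

/-- `W(b) = diag(b) Ψ diag(b)`. -/
noncomputable def cauchyW (n : ℕ) (lam : Fin n → ℝ) (b : Fin n → ℝ) :
    Matrix (Fin n) (Fin n) ℝ :=
  Matrix.diagonal b * cauchyPsi n lam * Matrix.diagonal b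

/-- The diagonal signature matrix `σ*` with `i`-th diagonal entry `(-1)^i`. -/
noncomputable def sigmaStar (n : ℕ) : Matrix (Fin n) (Fin n) ℝ :=
  Matrix.diagonal fun i : Fin n => (-1 : ℝ) ^ (i : ℕ)

section Cauchy

variable {l m n o : Type*}

noncomputable def cauchyMatrix (x : m → ℝ) (y : n → ℝ) : Matrix m n ℝ :=
  of fun i j => (x i + y j)⁻¹

@[simp]
lemma cauchyMatrix_apply (x : m → ℝ) (y : n → ℝ) (i : m) (j : n) :
    cauchyMatrix x y i j = (x i + y j)⁻¹ := rfl

lemma cauchyMatrix_submatrix (x : m → ℝ) (y : n → ℝ) (e : l → m) (f : o → n) :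
    (cauchyMatrix x y).submatrix e f = cauchyMatrix (x ∘ e) (y ∘ f) := rfl

lemma transpose_cauchyMatrix (x : m → ℝ) (y : n → ℝ) :
    (cauchyMatrix x y)ᵀ = cauchyMatrix y x := by
  ext i j
  simp [add_comm]

lemma cauchyMatrix_sum (x : m ⊕ n → ℝ) (y : l ⊕ o → ℝ) :
    cauchyMatrix x y = fromBlocks (cauchyMatrix (x ∘ .inl) (y ∘ .inl))
      (cauchyMatrix (x ∘ .inl) (y ∘ .inr)) (cauchyMatrix (x ∘ .inr) (y ∘ .inl))
      (cauchyMatrix (x ∘ .inr) (y ∘ .inr)) :=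
  (fromBlocks_toBlocks _).symm

lemma inv_cauchyMatrix_fin_one (a b : Fin 1 → ℝ) (hab : a 0 + b 0 ≠ 0) :
    (cauchyMatrix a b)⁻¹ = of fun _ _ => a 0 + b 0 := by
  refine inv_eq_right_inv ?_
  ext i j
  rw [Subsingleton.elim i 0, Subsingleton.elim j 0, one_apply_eq]
  simp [Matrix.mul_apply, hab]

lemma cauchyMatrix_schurComplement [Fintype m] [Fintype n] [DecidableEq m] [DecidableEq n]
    (x : m → ℝ) (y : n → ℝ) (a b : Fin 1 → ℝ) (hxy : ∀ i j, x i + y j ≠ 0)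
    (hxb : ∀ i, x i + b 0 ≠ 0) (hay : ∀ j, a 0 + y j ≠ 0) (hab : a 0 + b 0 ≠ 0) :
    cauchyMatrix x y - cauchyMatrix x b * (cauchyMatrix a b)⁻¹ * cauchyMatrix a y =
      diagonal (fun i => (a 0 - x i) / (x i + b 0)) * cauchyMatrix x y *
        diagonal (fun j => (b 0 - y j) / (a 0 + y j)) := by
  rw [inv_cauchyMatrix_fin_one a b hab]
  ext i j
  have := hxy i j
  have := hxb i
  have := hay j
  rw [Matrix.sub_apply, mul_diagonal, diagonal_mul]
  simp only [mul_apply, Fin.sum_univ_one, cauchyMatrix_apply, of_apply]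
  field_simp
  ring

lemma strictMono_finSumFinEquiv_inl {m : ℕ} :
    StrictMono (finSumFinEquiv ∘ Sum.inl : Fin m → Fin (m + 1)) :=
  Fin.strictMono_castSucc

lemma finSumFinEquiv_inl_lt_inr {m : ℕ} (i : Fin m) :
    finSumFinEquiv (Sum.inl i) < finSumFinEquiv (Sum.inr 0 : Fin m ⊕ Fin 1) :=
  Fin.castSucc_lt_last i

theorem det_cauchyMatrix_pos : ∀ {m : ℕ} {x y : Fin m → ℝ}, StrictMono x → StrictMono y →
    (∀ i j, 0 < x i + y j) → 0 < (cauchyMatrix x y).det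
  | 0, _, _, _, _, _ => by simp
  | m + 1, x, y, hx, hy, hxy => by
    set e : Fin m ⊕ Fin 1 ≃ Fin (m + 1) := finSumFinEquiv
    set x' := (x ∘ e) ∘ Sum.inl
    set y' := (y ∘ e) ∘ Sum.inl
    set a := (x ∘ e) ∘ Sum.inr
    set c := (y ∘ e) ∘ Sum.inr
    have hac : 0 < a 0 + c 0 := hxy _ _
    have hD : IsUnit (cauchyMatrix a c).det := by simpa [det_fin_one] using hac.ne'
    let := invertibleOfIsUnitDet _ hD
    have hd : 0 < ∏ i, (a 0 - x' i) / (x' i + c 0) := Finset.prod_pos fun i _ =>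
      div_pos (sub_pos.2 (hx (finSumFinEquiv_inl_lt_inr i))) (hxy _ _)
    have hw : 0 < ∏ j, (c 0 - y' j) / (a 0 + y' j) := Finset.prod_pos fun j _ =>
      div_pos (sub_pos.2 (hy (finSumFinEquiv_inl_lt_inr j))) (hxy _ _)
    have ih := det_cauchyMatrix_pos (x := x') (y := y') (hx.comp strictMono_finSumFinEquiv_inl)
      (hy.comp strictMono_finSumFinEquiv_inl) fun i j => hxy _ _
    rw [← det_submatrix_equiv_self e, cauchyMatrix_submatrix, cauchyMatrix_sum,
      det_fromBlocks₂₂, invOf_eq_nonsing_inv, cauchyMatrix_schurComplement x' y' a c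
        (fun i j => (hxy _ _).ne') (fun i => (hxy _ _).ne') (fun j => (hxy _ _).ne') hac.ne',
      det_mul, det_mul, det_diagonal, det_diagonal, det_fin_one, cauchyMatrix_apply]
    exact mul_pos (inv_pos.2 hac) (mul_pos (mul_pos hd ih) hw)

lemma cauchyMatrix_fin_one (a b : Fin 1 → ℝ) :
    cauchyMatrix a b = diagonal fun _ => (a 0 + b 0)⁻¹ := by
  ext i j
  simp [Subsingleton.elim i 0, Subsingleton.elim j 0]

theorem posSemidef_cauchyMatrix : ∀ {m : ℕ} {x : Fin m → ℝ}, (∀ i, 0 < x i) →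
    (cauchyMatrix x x).PosSemidef
  | 0, x, _ => Subsingleton.elim 0 (cauchyMatrix x x) ▸ PosSemidef.zero
  | m + 1, x, hx => by
    set e : Fin m ⊕ Fin 1 ≃ Fin (m + 1) := finSumFinEquiv
    set x' := (x ∘ e) ∘ Sum.inl
    set a := (x ∘ e) ∘ Sum.inr
    have hD : (cauchyMatrix a a).PosDef := by
      rw [cauchyMatrix_fin_one]
      exact posDef_diagonal_iff.2 fun _ => inv_pos.2 (add_pos (hx _) (hx _))
    let := hD.isUnit.invertible
    have hC : cauchyMatrix a x' = (cauchyMatrix x' a)ᴴ := by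
      rw [conjTranspose_eq_transpose_of_trivial, transpose_cauchyMatrix]
    rw [← posSemidef_submatrix_equiv e, cauchyMatrix_submatrix, cauchyMatrix_sum, hC,
      hD.fromBlocks₂₂, ← hC, cauchyMatrix_schurComplement x' x' a a
        (fun i j => (add_pos (hx _) (hx _)).ne') (fun i => (add_pos (hx _) (hx _)).ne')
        (fun j => (add_pos (hx _) (hx _)).ne') (add_pos (hx _) (hx _)).ne']
    have hw : (fun j => (a 0 - x' j) / (a 0 + x' j)) =
        star fun j => (a 0 - x' j) / (x' j + a 0) := by
      simp only [star_trivial, add_comm]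
    rw [hw, ← diagonal_conjTranspose]
    exact (posSemidef_cauchyMatrix (x := x') fun i => hx _).mul_mul_conjTranspose_same _

theorem neg_one_pow_mul_inv_cauchyMatrix_pos {n : ℕ} {x y : Fin n → ℝ} (hx : StrictMono x)
    (hy : StrictMono y) (hxy : ∀ i j, 0 < x i + y j) (i j : Fin n) :
    0 < (-1) ^ (i + j : ℕ) * (cauchyMatrix x y)⁻¹ i j := by
  cases n with
  | zero => exact i.elim0
  | succ m =>
    have hdet := det_cauchyMatrix_pos hx hy hxy
    have hminor := det_cauchyMatrix_pos (hx.comp (Fin.strictMono_succAbove j))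
      (hy.comp (Fin.strictMono_succAbove i)) fun _ _ => hxy _ _
    rw [inv_def, Matrix.smul_apply, adjugate_fin_succ_eq_det_submatrix, smul_eq_mul,
      Ring.inverse_eq_inv, cauchyMatrix_submatrix, add_comm (j : ℕ)]
    have hsq : (-1 : ℝ) ^ (i + j : ℕ) * (-1) ^ (i + j : ℕ) = 1 := by rw [← mul_pow]; simp
    rw [mul_left_comm, ← mul_assoc ((-1 : ℝ) ^ (i + j : ℕ)), hsq, one_mul]
    exact mul_pos (inv_pos.2 hdet) hminor

end Cauchy

section SignedQuadraticForms

variable {ι R : Type*} [Fintype ι]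

lemma nonempty_of_sum_sq_eq_one {b : ι → ℝ} (hb1 : ∑ i, b i ^ 2 = 1) : Nonempty ι :=
  Finset.univ_nonempty_iff.1 <| Finset.nonempty_of_sum_ne_zero <| hb1 ▸ one_ne_zero

lemma diagonal_mul_mul_diagonal_mulVec [CommSemiring R] [DecidableEq ι] (d v : ι → R)
    (A : Matrix ι ι R) : (diagonal d * A * diagonal d) *ᵥ v = d * A *ᵥ (d * v) := by
  have hdiag : ∀ u, diagonal d *ᵥ u = d * u := fun u => funext (mulVec_diagonal d u)
  rw [← mulVec_mulVec, ← mulVec_mulVec, hdiag, hdiag]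

lemma dotProduct_diagonal_mul_mul_diagonal_mulVec [CommSemiring R] [DecidableEq ι]
    (d v w : ι → R) (A : Matrix ι ι R) :
    v ⬝ᵥ (diagonal d * A * diagonal d) *ᵥ w = (d * v) ⬝ᵥ A *ᵥ (d * w) := by
  rw [diagonal_mul_mul_diagonal_mulVec]
  exact Fintype.sum_congr _ _ fun i => by simp only [Pi.mul_apply]; ring

lemma one_dotProduct_mulVec_one_sub (M : Matrix ι ι ℝ) {δ : ι → ℝ} (hδ : ∀ i, δ i ^ 2 = 1) :
    1 ⬝ᵥ M *ᵥ 1 - δ ⬝ᵥ M *ᵥ δ = ∑ i, ∑ j, M i j * (δ i - δ j) ^ 2 / 2 := by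
  simp only [dotProduct, mulVec, Finset.mul_sum, ← Finset.sum_sub_distrib, Pi.one_apply]
  exact Fintype.sum_congr _ _ fun i => Fintype.sum_congr _ _ fun j => by
    linear_combination (-M i j / 2) * hδ i + (-M i j / 2) * hδ j

lemma dotProduct_mulVec_le_one_dotProduct_mulVec_one {M : Matrix ι ι ℝ} (hM : ∀ i j, 0 ≤ M i j)
    {δ : ι → ℝ} (hδ : ∀ i, δ i ^ 2 = 1) : δ ⬝ᵥ M *ᵥ δ ≤ 1 ⬝ᵥ M *ᵥ 1 := by
  have hsum := one_dotProduct_mulVec_one_sub M hδ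
  have : 0 ≤ ∑ i, ∑ j, M i j * (δ i - δ j) ^ 2 / 2 :=
    Finset.sum_nonneg fun i _ => Finset.sum_nonneg fun j _ => by have := hM i j; positivity
  linarith

lemma eq_of_dotProduct_mulVec_eq_one_dotProduct_mulVec_one {M : Matrix ι ι ℝ}
    (hM : ∀ i j, 0 < M i j) {δ : ι → ℝ} (hδ : ∀ i, δ i ^ 2 = 1)
    (h : δ ⬝ᵥ M *ᵥ δ = 1 ⬝ᵥ M *ᵥ 1) (i j : ι) : δ i = δ j := by
  have hsum := one_dotProduct_mulVec_one_sub M hδ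
  have hterm : ∀ i j, 0 ≤ M i j * (δ i - δ j) ^ 2 / 2 := fun i j => by
    have := hM i j; positivity
  rw [h, sub_self, eq_comm, Fintype.sum_eq_zero_iff_of_nonneg fun i =>
    Finset.sum_nonneg fun j _ => hterm i j] at hsum
  have hij := (Fintype.sum_eq_zero_iff_of_nonneg (hterm i)).1 (congrFun hsum i)
  have := congrFun hij j
  simp only [Pi.zero_apply, div_eq_zero_iff, mul_eq_zero, (hM i j).ne', false_or,
    OfNat.ofNat_ne_zero, or_false] at this
  exact sub_eq_zero.1 (pow_eq_zero_iff two_ne_zero |>.1 this)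

theorem Matrix.IsHermitian.sInf_spectrum_mul_dotProduct_self_le [DecidableEq ι]
    {W : Matrix ι ι ℝ} (hW : W.IsHermitian) (v : ι → ℝ) :
    sInf (spectrum ℝ W) * (v ⬝ᵥ v) ≤ v ⬝ᵥ W *ᵥ v := by
  have hpsd : (W - algebraMap ℝ _ (sInf (spectrum ℝ W))).PosSemidef := by
    rw [posSemidef_iff_isHermitian_and_spectrum_nonneg, ← spectrum.sub_singleton_eq,
      algebraMap_eq_diagonal]
    refine ⟨hW.sub (isHermitian_diagonal _), ?_⟩
    rintro _ ⟨μ, hμ, _, rfl, rfl⟩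
    exact sub_nonneg.2 (csInf_le finite_real_spectrum.bddBelow hμ)
  have := hpsd.dotProduct_mulVec_nonneg v
  rw [Algebra.algebraMap_eq_smul_one, sub_mulVec, smul_mulVec, one_mulVec, dotProduct_sub,
    dotProduct_smul, star_trivial, smul_eq_mul] at this
  linarith

theorem Matrix.PosDef.sInf_spectrum_pos [DecidableEq ι] [Nonempty ι] {W : Matrix ι ι ℝ}
    (hW : W.PosDef) : 0 < sInf (spectrum ℝ W) := by
  rw [hW.1.spectrum_real_eq_range_eigenvalues]
  obtain ⟨i, hi⟩ := (Set.range_nonempty hW.1.eigenvalues).csInf_mem (Set.finite_range _)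
  exact hi ▸ hW.eigenvalues_pos i

variable [DecidableEq ι]

lemma posDef_diagonal_mul_mul_diagonal {A : Matrix ι ι ℝ} (hA : A.PosDef) {b : ι → ℝ}
    (hb : ∀ i, b i ≠ 0) : (diagonal b * A * diagonal b).PosDef := by
  have := hA.conjTranspose_mul_mul_same (B := diagonal b) <| mulVec_injective_iff_isUnit.2 <|
    isUnit_diagonal.2 <| Pi.isUnit_iff.2 fun i => (hb i).isUnit
  rwa [diagonal_conjTranspose, star_trivial] at this

lemma exists_sign_vector_of_mulVec_eq_smul {A : Matrix ι ι ℝ} {b x : ι → ℝ} {μ : ℝ} (hμ : μ ≠ 0)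
    (hb : ∀ i, b i ≠ 0) (hbx : (diagonal b * A * diagonal b) *ᵥ x = μ • x)
    (hxb : (diagonal x * A * diagonal x) *ᵥ b = μ • b) :
    ∃ ε : ι → ℝ, (∀ i, ε i ^ 2 = 1) ∧ x = ε * b ∧ A *ᵥ (ε * b ^ 2) = μ • ε := by
  rw [diagonal_mul_mul_diagonal_mulVec] at hbx hxb
  rw [mul_comm x b] at hxb
  set u := A *ᵥ (b * x)
  have hbu : ∀ i, b i * u i = μ * x i := fun i => congrFun hbx i
  have hxu : ∀ i, x i * u i = μ * b i := fun i => congrFun hxb i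
  have hsq : ∀ i, x i ^ 2 = b i ^ 2 := fun i =>
    mul_left_cancel₀ hμ (by linear_combination b i * hxu i - x i * hbu i)
  refine ⟨x / b, fun i => ?_, ?_, ?_⟩
  · rw [Pi.div_apply, div_pow, hsq i, div_self (pow_ne_zero 2 (hb i))]
  · ext i
    simp [div_mul_cancel₀ _ (hb i)]
  · have hεb : x / b * b ^ 2 = b * x := by
      ext i
      simp only [Pi.mul_apply, Pi.div_apply, Pi.pow_apply]
      field_simp [hb i]
    rw [hεb]
    ext i
    simp only [Pi.smul_apply, Pi.div_apply, smul_eq_mul]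
    field_simp [hb i]
    linear_combination hbu i

theorem sInf_spectrum_mul_dotProduct_inv_mulVec_le_one {A : Matrix ι ι ℝ} (hA : A.PosDef)
    {b : ι → ℝ} (hb : ∀ i, b i ≠ 0) (hb1 : ∑ i, b i ^ 2 = 1) {s : ι → ℝ}
    (hs : ∀ i, s i ^ 2 = 1) :
    sInf (spectrum ℝ (diagonal b * A * diagonal b)) * (s ⬝ᵥ A⁻¹ *ᵥ s) ≤ 1 := by
  have : Nonempty ι := nonempty_of_sum_sq_eq_one hb1
  have hW := posDef_diagonal_mul_mul_diagonal hA hb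
  set L := sInf (spectrum ℝ (diagonal b * A * diagonal b))
  set w := A⁻¹ *ᵥ s
  have hL : 0 < L := hW.sInf_spectrum_pos
  have hS : 0 < s ⬝ᵥ w := by
    obtain ⟨i⟩ := ‹Nonempty ι›
    have hs0 : s ≠ 0 := fun h => by simpa [h] using hs i
    simpa using hA.inv.dotProduct_mulVec_pos hs0
  have hAw : A *ᵥ w = s := by
    rw [mulVec_mulVec, mul_nonsing_inv _ hA.det_pos.ne'.isUnit, one_mulVec]
  have hbw : b * (w / b) = w := by
    ext i
    simp [mul_div_cancel₀ _ (hb i)]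
  have hray : L * ((w / b) ⬝ᵥ (w / b)) ≤ s ⬝ᵥ w := by
    simpa only [dotProduct_diagonal_mul_mul_diagonal_mulVec, hbw, hAw, dotProduct_comm w s]
      using hW.1.sInf_spectrum_mul_dotProduct_self_le (w / b)
  have hcs : (s ⬝ᵥ w) ^ 2 ≤ (w / b) ⬝ᵥ (w / b) := by
    have hsb : ∀ i, (s * b) i * (w / b) i = s i * w i := fun i => by
      simp [mul_assoc, mul_div_cancel₀ _ (hb i)]
    have hsb2 : ∑ i, (s * b) i ^ 2 = 1 := by simp [mul_pow, hs, hb1]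
    have := Finset.sum_mul_sq_le_sq_mul_sq Finset.univ (s * b) (w / b)
    rw [Fintype.sum_congr _ _ hsb, hsb2, one_mul] at this
    simpa only [dotProduct, sq] using this
  have : L * (s ⬝ᵥ w) * (s ⬝ᵥ w) ≤ 1 * (s ⬝ᵥ w) := by
    nlinarith [mul_le_mul_of_nonneg_left hcs hL.le]
  exact le_of_mul_le_mul_right this hS

lemma exists_eq_smul_of_le_dotProduct_mulVec {B : Matrix ι ι ℝ} {s ε : ι → ℝ} [Nonempty ι]
    (hs : ∀ i, s i ^ 2 = 1) (hε : ∀ i, ε i ^ 2 = 1)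
    (hB : ∀ i j, 0 < (diagonal s * B * diagonal s) i j) (h : s ⬝ᵥ B *ᵥ s ≤ ε ⬝ᵥ B *ᵥ ε) :
    ∃ τ : ℝ, τ * τ = 1 ∧ ε = τ • s := by
  set δ := s * ε
  have hδ : ∀ i, δ i ^ 2 = 1 := fun i => by simp [δ, mul_pow, hs, hε]
  have hsδ : s * δ = ε := by
    ext i
    simp only [δ, Pi.mul_apply]
    linear_combination (ε i) * hs i
  have hquad : δ ⬝ᵥ (diagonal s * B * diagonal s) *ᵥ δ = ε ⬝ᵥ B *ᵥ ε := by
    rw [dotProduct_diagonal_mul_mul_diagonal_mulVec, hsδ]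
  have hone : 1 ⬝ᵥ (diagonal s * B * diagonal s) *ᵥ 1 = s ⬝ᵥ B *ᵥ s := by
    rw [dotProduct_diagonal_mul_mul_diagonal_mulVec, mul_one]
  have heq := le_antisymm (dotProduct_mulVec_le_one_dotProduct_mulVec_one
    (fun i j => (hB i j).le) hδ) (hone ▸ hquad ▸ h)
  obtain ⟨i₀⟩ := ‹Nonempty ι›
  refine ⟨δ i₀, by simpa [sq] using hδ i₀, ?_⟩
  ext i
  rw [← hsδ, Pi.mul_apply, Pi.smul_apply, smul_eq_mul,
    eq_of_dotProduct_mulVec_eq_one_dotProduct_mulVec_one hB hδ heq i i₀, mul_comm]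

theorem critical_point_characterization_of_posDef {A : Matrix ι ι ℝ} (hA : A.PosDef) {s : ι → ℝ}
    (hs : ∀ i, s i ^ 2 = 1) (hAs : ∀ i j, 0 < (diagonal s * A⁻¹ * diagonal s) i j)
    {b x : ι → ℝ} (hb1 : ∑ i, b i ^ 2 = 1) (hb : ∀ i, b i ≠ 0)
    (hbx : (diagonal b * A * diagonal b) *ᵥ x =
      sInf (spectrum ℝ (diagonal b * A * diagonal b)) • x)
    (hxb : (diagonal x * A * diagonal x) *ᵥ b =
      sInf (spectrum ℝ (diagonal b * A * diagonal b)) • b) :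
    sInf (spectrum ℝ (diagonal b * A * diagonal b)) =
        (1 ⬝ᵥ (diagonal s * A⁻¹ * diagonal s) *ᵥ 1)⁻¹ ∧
      (∀ i, b i ^ 2 = sInf (spectrum ℝ (diagonal b * A * diagonal b)) *
        ((diagonal s * A⁻¹ * diagonal s) *ᵥ 1) i) ∧
      (x = diagonal s *ᵥ b ∨ x = -(diagonal s *ᵥ b)) := by
  have : Nonempty ι := nonempty_of_sum_sq_eq_one hb1
  have hL := (posDef_diagonal_mul_mul_diagonal hA hb).sInf_spectrum_pos
  set L := sInf (spectrum ℝ (diagonal b * A * diagonal b))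
  obtain ⟨ε, hε, rfl, hAε⟩ := exists_sign_vector_of_mulVec_eq_smul hL.ne' hb hbx hxb
  have hεε : ε * ε = 1 := funext fun i => by simpa [sq] using hε i
  have hεb : ε * b ^ 2 = L • A⁻¹ *ᵥ ε := by
    rw [← mulVec_smul, ← hAε, mulVec_mulVec, nonsing_inv_mul _ hA.det_pos.ne'.isUnit,
      one_mulVec]
  have hb2 : b ^ 2 = L • (ε * A⁻¹ *ᵥ ε) := by
    rw [← mul_smul_comm, ← hεb, ← mul_assoc, hεε, one_mul]
  have hnorm : L * (ε ⬝ᵥ A⁻¹ *ᵥ ε) = 1 := by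
    rw [← hb1, dotProduct, Finset.mul_sum]
    exact Fintype.sum_congr _ _ fun i => (congrFun hb2 i).symm
  obtain ⟨τ, hτ, rfl⟩ := exists_eq_smul_of_le_dotProduct_mulVec hs hε hAs <|
    le_of_mul_le_mul_left (hnorm ▸ sInf_spectrum_mul_dotProduct_inv_mulVec_le_one hA hb hb1 hs) hL
  have hP : (diagonal s * A⁻¹ * diagonal s) *ᵥ 1 = τ • s * A⁻¹ *ᵥ (τ • s) := by
    rw [diagonal_mul_mul_diagonal_mulVec, mul_one, mulVec_smul, smul_mul_smul_comm, hτ, one_smul]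
  refine ⟨?_, fun i => ?_, ?_⟩
  · rw [hP, eq_inv_of_mul_eq_one_left hnorm]
    simp [dotProduct]
  · rw [hP]
    exact congrFun hb2 i
  · have hsb : diagonal s *ᵥ b = s * b := funext (mulVec_diagonal s b)
    rw [hsb]
    rcases mul_self_eq_one_iff.1 hτ with rfl | rfl <;> simp

end SignedQuadraticForms

lemma cauchyPsi_eq_cauchyMatrix (n : ℕ) (lam : Fin n → ℝ) :
    cauchyPsi n lam = cauchyMatrix lam lam := by
  ext i j
  simp [cauchyPsi]

theorem critical_point_characterization_general (n : ℕ) (lam : Fin n → ℝ)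
    (hpos : ∀ i, 0 < lam i) (hmono : StrictMono lam)
    (b : Fin n → ℝ) (hb_unit : ∑ i, b i ^ 2 = 1) (hb : ∀ i, b i ≠ 0)
    (x : Fin n → ℝ)
    (hx_eig : (cauchyW n lam b).mulVec x =
      sInf (spectrum ℝ (cauchyW n lam b)) • x)
    (hxb : (cauchyW n lam x).mulVec b =
      sInf (spectrum ℝ (cauchyW n lam b)) • b) :
    sInf (spectrum ℝ (cauchyW n lam b)) =
        ((fun _ : Fin n => (1 : ℝ)) ⬝ᵥ
          (sigmaStar n * (cauchyPsi n lam)⁻¹ * sigmaStar n).mulVec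
            fun _ : Fin n => (1 : ℝ))⁻¹ ∧
      (∀ i, b i ^ 2 =
        sInf (spectrum ℝ (cauchyW n lam b)) *
          ((sigmaStar n * (cauchyPsi n lam)⁻¹ * sigmaStar n).mulVec
            (fun _ : Fin n => (1 : ℝ)) i)) ∧
      (x = (sigmaStar n).mulVec b ∨ x = -(sigmaStar n).mulVec b) := by
  have hsum : ∀ i j, 0 < lam i + lam j := fun i j => add_pos (hpos i) (hpos j)
  have hΨ := cauchyPsi_eq_cauchyMatrix n lam
  have hΨpos : (cauchyPsi n lam).PosDef := by
    rw [hΨ, (posSemidef_cauchyMatrix hpos).posDef_iff_det_ne_zero]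
    exact (det_cauchyMatrix_pos hmono hmono hsum).ne'
  have hsign : ∀ i j, 0 < (sigmaStar n * (cauchyPsi n lam)⁻¹ * sigmaStar n) i j := fun i j => by
    rw [sigmaStar, mul_diagonal, diagonal_mul, hΨ, mul_right_comm, ← pow_add]
    exact neg_one_pow_mul_inv_cauchyMatrix_pos hmono hmono hsum i j
  exact critical_point_characterization_of_posDef (s := fun i : Fin n => (-1 : ℝ) ^ (i : ℕ))
    hΨpos (fun i => by simp [← pow_mul]) hsign hb_unit hb hx_eig hxb

/-- If `b` is a unit vector with nonzero entries, `λ` the smallest eigenvalue of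
`W(b)`, `x` a unit eigenvector of `W(b)` for `λ` with additionally `W(x) b = λ b`,
then `λ = (1ᵀ σ* Ψ⁻¹ σ* 1)⁻¹`, `bᵢ² = λ (σ* Ψ⁻¹ σ* 1)ᵢ` for all `i`, and
`x = ±σ* b`. -/
theorem critical_point_characterization (n : ℕ) (hn : 0 < n) (lam : Fin n → ℝ)
    (hpos : ∀ i, 0 < lam i) (hmono : StrictMono lam)
    (b : Fin n → ℝ) (hb_unit : ∑ i, b i ^ 2 = 1) (hb : ∀ i, b i ≠ 0)
    (x : Fin n → ℝ) (hx_unit : ∑ i, x i ^ 2 = 1)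
    (hx_eig : (cauchyW n lam b).mulVec x =
      sInf (spectrum ℝ (cauchyW n lam b)) • x)
    (hxb : (cauchyW n lam x).mulVec b =
      sInf (spectrum ℝ (cauchyW n lam b)) • b) :
    sInf (spectrum ℝ (cauchyW n lam b)) =
        ((fun _ : Fin n => (1 : ℝ)) ⬝ᵥ
          (sigmaStar n * (cauchyPsi n lam)⁻¹ * sigmaStar n).mulVec
            fun _ : Fin n => (1 : ℝ))⁻¹ ∧
      (∀ i, b i ^ 2 =
        sInf (spectrum ℝ (cauchyW n lam b)) *
          ((sigmaStar n * (cauchyPsi n lam)⁻¹ * sigmaStar n).mulVec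
            (fun _ : Fin n => (1 : ℝ)) i)) ∧
      (x = (sigmaStar n).mulVec b ∨ x = -(sigmaStar n).mulVec b) :=
  critical_point_characterization_general n lam hpos hmono b hb_unit hb x hx_eig hxb
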